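/- Let d ≥ 1, D = 2d+2, and let g : ℤ → ℤ be a bijection with g(i + D) = g(i) + D and g(-i) = -g(i) for all i ∈ ℤ. Then (1/2)·#{(i, m) ∈ [1..d] × ℤ : (i < m ∧ g(i) > g(m)) ∨ (i > m ∧ g(i) < g(m))} = (1/2)·#{(i, m) ∈ [1..d] × [-d..d] : (i < m ∧ g(i) > g(m)) ∨ (i > m ∧ g(i) < g(m))} + ∑_{1 ≤ i ≤ j ≤ d} ( ⌊|g(i) - g(j)|/D⌋ + ⌊|g(i) + g(j)|/D⌋ ). -/

import Mathlib

/-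
Write `D = 2d + 2` and `m = j + kD` with `j` in the window `[-d, d + 1]`. Since `g` commutes with
translation by `D`, the pair `(i, j + kD)` is an inversion iff `kD` lies strictly between `i - j`
and `g i - g j`, so the inversion count is a sum over `(i, j)` of the number of such `k`. As `g` is
injective and `|i - j| < D`, `D` divides `g i - g j` only when `i = j`, and then that number is
`⌊|g i - g j| / D⌋`, plus one exactly when `(i, j)` is itself an inversion. Oddness of `g` turns
the residues `j = -1, …, -d` into the terms `⌊|g i + g j| / D⌋`, and the two fixed points `0` and
`d + 1` together count the multiples of `d + 1` between `i` and `g i`, which gives the diagonal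
term `⌊|2 g i| / D⌋`.
-/

open Finset
open scoped Pointwise

theorem Int.abs_ediv_of_not_dvd {D x : ℤ} (hD : 0 < D) (hx : ¬ D ∣ x) :
    |x| / D = if 0 ≤ x then x / D else -(x / D) - 1 := by
  split_ifs with h
  · rw [abs_of_nonneg h]
  · rw [abs_of_neg (not_le.mp h), Int.neg_ediv, if_neg hx, Int.sign_eq_one_of_pos hD]

theorem Int.sub_one_ediv_of_not_dvd {D x : ℤ} (hD : 0 < D) (hx : ¬ D ∣ x) :
    (x - 1) / D = x / D := by
  have h₁ := Int.emod_add_mul_ediv x D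
  have h₂ := Int.emod_nonneg x hD.ne'
  have h₃ := Int.emod_lt_of_pos x hD
  have h₄ : x % D ≠ 0 := mt Int.dvd_of_emod_eq_zero hx
  rw [Int.ediv_eq_iff_of_pos hD, mul_comm]
  omega

theorem Int.abs_ediv_two_mul_add_abs_sub_ediv_two_mul {e x : ℤ} (he : 0 < e) (hx : ¬ e ∣ x) :
    |x| / (2 * e) + |x - e| / (2 * e) + (if e < x then 1 else 0) = |x| / e := by
  have he₂ : 0 < 2 * e := by omega
  have hxe : ¬ e ∣ x - e := fun h => hx (by simpa using h.add (dvd_refl e))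
  have half : ∀ y, y / (2 * e) = y / e / 2 := fun y => by
    rw [Int.ediv_ediv, if_neg (by omega), sub_zero, mul_comm]
  have hsub : (x - e) / e = x / e - 1 := by
    rw [sub_eq_add_neg, ← neg_one_mul, Int.add_mul_ediv_right _ _ he.ne']; ring
  have h₀ := Int.le_ediv_iff_mul_le (a := 0) (b := x) he
  have h₁ := Int.le_ediv_iff_mul_le (a := 1) (b := x) he
  have hne : x ≠ e := fun h => hx (h ▸ dvd_refl e)
  rw [Int.abs_ediv_of_not_dvd he₂ (fun h => hx ((dvd_mul_left e 2).trans h)),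
    Int.abs_ediv_of_not_dvd he₂ (fun h => hxe ((dvd_mul_left e 2).trans h)),
    Int.abs_ediv_of_not_dvd he hx, half, half, hsub]
  split_ifs <;> omega

theorem Finset.sum_Icc_neg_self {M : Type*} [AddCommMonoid M] (f : ℤ → M) {n : ℤ} (hn : 0 ≤ n) :
    ∑ j ∈ Icc (-n) n, f j = f 0 + ∑ j ∈ Icc 1 n, (f j + f (-j)) := by
  have hsplit : Icc (-n) n = insert 0 (Icc 1 n ∪ -Icc 1 n) := by
    ext j; simp only [mem_Icc, mem_insert, mem_union, mem_neg']; omega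
  have hdisj : Disjoint (Icc 1 n) (-Icc 1 n) := by
    rw [disjoint_left]; intro j; simp only [mem_Icc, mem_neg']; omega
  rw [hsplit, sum_insert (by simp), sum_union hdisj, sum_neg_index, sum_add_distrib]

theorem Finset.two_mul_sum_filter_le {M α : Type*} [NonAssocSemiring M] [LinearOrder α]
    (s : Finset α) (F : α × α → M) (hF : ∀ i j, F (i, j) = F (j, i)) :
    2 * ∑ p ∈ s ×ˢ s with p.1 ≤ p.2, F p = ∑ p ∈ s ×ˢ s, F p + ∑ i ∈ s, F (i, i) := by
  have hswap : ∑ p ∈ s ×ˢ s with p.2 ≤ p.1, F p = ∑ p ∈ s ×ˢ s with p.1 ≤ p.2, F p := by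
    refine sum_nbij' Prod.swap Prod.swap ?_ ?_ (by simp) (by simp) (fun p _ => hF _ _)
    all_goals intro p; simp +contextual [and_comm]
  rw [two_mul, ← sum_diag]
  nth_rewrite 2 [← hswap]
  rw [← sum_union_inter, ← filter_or, ← filter_and,
    filter_true_of_mem fun p _ => le_total p.1 p.2]
  congr 2
  ext ⟨a, b⟩
  simp only [mem_filter, mem_product, mem_diag, ← le_antisymm_iff]
  constructor <;> rintro ⟨h, rfl⟩ <;> simp_all

/-- The integers `k` such that `k * D` lies strictly between `a` and `b`. -/
noncomputable def multiplesBetween (D a b : ℤ) : Finset ℤ :=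
  Ioc (min a b / D) ((max a b - 1) / D)

theorem mem_multiplesBetween {D a b k : ℤ} (hD : 0 < D) :
    k ∈ multiplesBetween D a b ↔ (a < k * D ∧ k * D < b) ∨ (b < k * D ∧ k * D < a) := by
  rw [multiplesBetween, mem_Ioc, Int.ediv_lt_iff_lt_mul hD, Int.le_ediv_iff_mul_le hD]
  omega

theorem card_multiplesBetween {D a b : ℤ} (hD : 0 < D) (ha : |a| < D) (hb : D ∣ b → b = 0) :
    (#(multiplesBetween D a b) : ℤ) =
      |b| / D + if (0 < a ∧ b < 0) ∨ (a < 0 ∧ 0 < b) then 1 else 0 := by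
  rw [abs_lt] at ha
  have small : ∀ x, -D ≤ x → x < D → x / D = if x < 0 then -1 else 0 := fun x h₁ h₂ => by
    rw [Int.ediv_eq_iff_of_pos hD]; split_ifs <;> omega
  have ha₁ := small a (by omega) (by omega)
  have ha₂ := small (a - 1) (by omega) (by omega)
  have hb₁ : (b - 1) / D = if b = 0 then -1 else b / D := by
    split_ifs with h
    · exact h ▸ small (0 - 1) (by omega) (by omega)
    · exact Int.sub_one_ediv_of_not_dvd hD (mt hb h)
  have hb₂ : |b| / D = if 0 ≤ b then b / D else -(b / D) - 1 := by
    rcases eq_or_ne b 0 with rfl | h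
    · simp
    · exact Int.abs_ediv_of_not_dvd hD (mt hb h)
  have hb₃ := Int.le_ediv_iff_mul_le (a := 0) (b := b) hD
  have hb₄ := Int.le_ediv_iff_mul_le (a := -1) (b := b) hD
  have hb₅ := Int.ediv_lt_iff_lt_mul (a := b) (b := 1) hD
  rw [multiplesBetween, Int.card_Ioc, hb₂]
  rcases le_total a b with hab | hab
  · rw [min_eq_left hab, max_eq_right hab]
    split_ifs at * <;> omega
  · rw [min_eq_right hab, max_eq_left hab]
    split_ifs at * <;> omega

section AddPeriodic

variable {D : ℤ} {g : ℤ → ℤ}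

theorem map_add_mul_of_map_add (hper : ∀ i, g (i + D) = g i + D) (k x : ℤ) :
    g (x + k * D) = g x + k * D := by
  have h : Function.Periodic (fun x => g x - x) D := fun x => by simp only [hper]; ring
  have := h.int_mul k x
  simp only [Int.cast_id] at this
  linarith

theorem eq_of_dvd_map_sub_map (hinj : Function.Injective g) (hper : ∀ i, g (i + D) = g i + D)
    {x y : ℤ} (hxy : |x - y| < D) (hdvd : D ∣ g x - g y) : x = y := by
  obtain ⟨k, hk⟩ := hdvd
  have hx : x = y + k * D :=
    hinj (by rw [map_add_mul_of_map_add hper]; linarith)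
  have hD : 0 < D := (abs_nonneg _).trans_lt hxy
  rw [hx, add_sub_cancel_left, abs_mul, abs_of_pos hD, mul_lt_iff_lt_one_left hD,
    Int.abs_lt_one_iff] at hxy
  rw [hx, hxy, zero_mul, add_zero]

theorem mem_multiplesBetween_iff (hD : 0 < D) (hper : ∀ i, g (i + D) = g i + D) (i j k : ℤ) :
    k ∈ multiplesBetween D (i - j) (g i - g j) ↔
      (i < j + k * D ∧ g (j + k * D) < g i) ∨ (j + k * D < i ∧ g i < g (j + k * D)) := by
  rw [mem_multiplesBetween hD, map_add_mul_of_map_add hper]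
  omega

theorem natCard_inversions_eq_sum (hD : 0 < D) (hper : ∀ i, g (i + D) = g i + D)
    (I : Finset ℤ) (c : ℤ) :
    Nat.card {p : ℤ × ℤ | p.1 ∈ I ∧ ((p.1 < p.2 ∧ g p.2 < g p.1) ∨ (p.2 < p.1 ∧ g p.1 < g p.2))} =
      ∑ i ∈ I, ∑ j ∈ Ico c (c + D), #(multiplesBetween D (i - j) (g i - g j)) := by
  set S := (I ×ˢ Ico c (c + D)).sigma fun p => multiplesBetween D (p.1 - p.2) (g p.1 - g p.2)
  set φ : (_ : ℤ × ℤ) × ℤ → ℤ × ℤ := fun x => (x.1.1, x.1.2 + x.2 * D)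
  have hset : {p : ℤ × ℤ | p.1 ∈ I ∧ ((p.1 < p.2 ∧ g p.2 < g p.1) ∨ (p.2 < p.1 ∧ g p.1 < g p.2))}
      = ↑(S.image φ) := by
    ext ⟨i, m⟩
    simp only [Set.mem_ofPred_eq, coe_image, Set.mem_image, mem_coe, S, φ, mem_sigma, mem_product,
      mem_Ico, mem_multiplesBetween_iff hD hper, Prod.mk.injEq]
    constructor
    · rintro ⟨hi, hinv⟩
      have hm : c + (m - c) % D + (m - c) / D * D = m := by
        have := Int.emod_add_mul_ediv (m - c) D; rw [mul_comm] at this; omega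
      have := Int.emod_nonneg (m - c) hD.ne'
      have := Int.emod_lt_of_pos (m - c) hD
      exact ⟨⟨(i, c + (m - c) % D), (m - c) / D⟩, ⟨⟨hi, by dsimp only; omega⟩, by rwa [hm]⟩,
        rfl, hm⟩
    · rintro ⟨⟨⟨i', j⟩, k⟩, ⟨⟨hi, -⟩, hinv⟩, rfl, rfl⟩
      exact ⟨hi, hinv⟩
  have hinj : Set.InjOn φ S := by
    rintro ⟨⟨i, j⟩, k⟩ hx ⟨⟨i', j'⟩, k'⟩ hy hxy
    simp only [S, mem_coe, mem_sigma, mem_product, mem_Ico, φ, Prod.mk.injEq] at hx hy hxy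
    obtain ⟨rfl, hjk⟩ := hxy
    have residue : ∀ j k, c ≤ j → j < c + D → (j - c + k * D) % D = j - c := fun j k h₁ h₂ => by
      rw [Int.add_mul_emod_self_right, Int.emod_eq_of_lt (by omega) (by omega)]
    have hj : j = j' := by
      have := residue j k hx.1.2.1 hx.1.2.2
      rw [show j - c + k * D = j' - c + k' * D by linarith, residue j' k' hy.1.2.1 hy.1.2.2] at this
      omega
    subst hj
    rw [mul_right_cancel₀ hD.ne' (add_left_cancel hjk)]
  rw [hset, Nat.card_coe_set_eq, Set.ncard_coe_finset, card_image_of_injOn hinj, card_sigma,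
    sum_product]

theorem card_multiplesBetween_map_sub (hinj : Function.Injective g)
    (hper : ∀ i, g (i + D) = g i + D) {i j : ℤ} (hij : |i - j| < D) :
    (#(multiplesBetween D (i - j) (g i - g j)) : ℤ) =
      |g i - g j| / D + if (i < j ∧ g j < g i) ∨ (j < i ∧ g i < g j) then 1 else 0 := by
  have hD : 0 < D := (abs_nonneg _).trans_lt hij
  rw [card_multiplesBetween hD hij fun h => by rw [eq_of_dvd_map_sub_map hinj hper hij h, sub_self]]
  exact congrArg _ (if_congr (by omega) rfl rfl)

end AddPeriodic

section TypeC

variable {d : ℤ} {g : ℤ → ℤ}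

theorem map_zero_of_map_neg (hneg : ∀ i, g (-i) = -g i) : g 0 = 0 := by
  have := hneg 0
  rw [neg_zero] at this
  omega

theorem map_half_period (hper : ∀ i, g (i + (2 * d + 2)) = g i + (2 * d + 2))
    (hneg : ∀ i, g (-i) = -g i) : g (d + 1) = d + 1 := by
  have := hper (-(d + 1))
  rw [show -(d + 1) + (2 * d + 2) = d + 1 by ring, hneg] at this
  omega

theorem not_dvd_map (hinj : Function.Injective g)
    (hper : ∀ i, g (i + (2 * d + 2)) = g i + (2 * d + 2)) (hneg : ∀ i, g (-i) = -g i)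
    {i : ℤ} (hi₁ : 1 ≤ i) (hi₂ : i ≤ d) : ¬ (d + 1) ∣ g i := by
  rintro ⟨m, hm⟩
  rcases Int.even_or_odd' m with ⟨n, rfl | rfl⟩
  · have := eq_of_dvd_map_sub_map hinj hper (x := i) (y := 0)
      (abs_lt.mpr ⟨by omega, by omega⟩) ⟨n, by rw [map_zero_of_map_neg hneg, hm]; ring⟩
    omega
  · have := eq_of_dvd_map_sub_map hinj hper (x := i) (y := d + 1)
      (abs_lt.mpr ⟨by omega, by omega⟩) ⟨n, by rw [map_half_period hper hneg, hm]; ring⟩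
    omega

theorem sum_window_card_multiplesBetween (hinj : Function.Injective g)
    (hper : ∀ i, g (i + (2 * d + 2)) = g i + (2 * d + 2)) (hneg : ∀ i, g (-i) = -g i)
    {i : ℤ} (hi : i ∈ Icc 1 d) :
    ∑ j ∈ Ico (-d) (-d + (2 * d + 2)), (#(multiplesBetween (2 * d + 2) (i - j) (g i - g j)) : ℤ) =
      ∑ j ∈ Icc (-d) d, (if (i < j ∧ g j < g i) ∨ (j < i ∧ g i < g j) then 1 else 0) +
        (∑ j ∈ Icc 1 d, (|g i - g j| / (2 * d + 2) + |g i + g j| / (2 * d + 2)) +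
          (|g i - g i| / (2 * d + 2) + |g i + g i| / (2 * d + 2))) := by
  obtain ⟨hi₁, hi₂⟩ := mem_Icc.mp hi
  have hwindow : Ico (-d) (-d + (2 * d + 2)) = insert (d + 1) (Icc (-d) d) := by
    ext j; simp only [mem_Ico, mem_insert, mem_Icc]; omega
  have hcard : ∀ j ∈ insert (d + 1) (Icc (-d) d),
      (#(multiplesBetween (2 * d + 2) (i - j) (g i - g j)) : ℤ) = |g i - g j| / (2 * d + 2) +
        if (i < j ∧ g j < g i) ∨ (j < i ∧ g i < g j) then 1 else 0 := fun j hj => by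
    simp only [mem_insert, mem_Icc] at hj
    exact card_multiplesBetween_map_sub hinj hper (abs_lt.mpr ⟨by omega, by omega⟩)
  have hfixed : (if (i < d + 1 ∧ g (d + 1) < g i) ∨ (d + 1 < i ∧ g i < g (d + 1)) then 1 else 0)
      = if d + 1 < g i then (1 : ℤ) else 0 := by
    rw [map_half_period hper hneg]; exact if_congr (by omega) rfl rfl
  have hdouble : |g i + g i| / (2 * d + 2) = |g i| / (d + 1) := by
    rw [← two_mul, abs_mul, abs_two, show 2 * d + 2 = 2 * (d + 1) by ring,
      Int.mul_ediv_mul_of_pos _ _ two_pos]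
  have hdiag := Int.abs_ediv_two_mul_add_abs_sub_ediv_two_mul (by omega : 0 < d + 1)
    (not_dvd_map hinj hper hneg hi₁ hi₂)
  rw [show 2 * (d + 1) = 2 * d + 2 by ring] at hdiag
  rw [hwindow, sum_congr rfl hcard, sum_insert (by simp), sum_add_distrib,
    sum_Icc_neg_self _ (by omega), hfixed, map_half_period hper hneg, map_zero_of_map_neg hneg]
  simp only [hneg, sub_neg_eq_add, sub_zero, sub_self, abs_zero, Int.zero_ediv, sum_add_distrib]
  linarith

end TypeC

/-- Decomposition of the symmetrized affine type C length formula: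
the inversion count over `[1..d] × ℤ` equals the one over `[1..d] × [-d..d]`
plus twice the affine floored-quotient corrections. (Both sides of the
identity from the paper are multiplied through by 2.) -/
theorem stmt_16 (d : ℤ) (hd : 1 ≤ d) (g : ℤ → ℤ) (hg : Function.Bijective g)
    (hper : ∀ i : ℤ, g (i + (2 * d + 2)) = g i + (2 * d + 2))
    (hneg : ∀ i : ℤ, g (-i) = - g i) :
    (Nat.card {p : ℤ × ℤ | 1 ≤ p.1 ∧ p.1 ≤ d ∧
        ((p.1 < p.2 ∧ g p.2 < g p.1) ∨ (p.2 < p.1 ∧ g p.1 < g p.2))} : ℤ)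
      = ((Finset.Icc 1 d ×ˢ Finset.Icc (-d) d).filter (fun p =>
            (p.1 < p.2 ∧ g p.2 < g p.1) ∨ (p.2 < p.1 ∧ g p.1 < g p.2))).card
        + 2 * ∑ p ∈ (Finset.Icc 1 d ×ˢ Finset.Icc 1 d).filter (fun p => p.1 ≤ p.2),
            (|g p.1 - g p.2| / (2 * d + 2) + |g p.1 + g p.2| / (2 * d + 2)) := by
  have hset : {p : ℤ × ℤ | 1 ≤ p.1 ∧ p.1 ≤ d ∧
        ((p.1 < p.2 ∧ g p.2 < g p.1) ∨ (p.2 < p.1 ∧ g p.1 < g p.2))} =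
      {p : ℤ × ℤ | p.1 ∈ Icc 1 d ∧
        ((p.1 < p.2 ∧ g p.2 < g p.1) ∨ (p.2 < p.1 ∧ g p.1 < g p.2))} := by
    simp only [mem_Icc, and_assoc]
  rw [hset, natCard_inversions_eq_sum (by omega) hper, card_filter, sum_product,
    two_mul_sum_filter_le _ _ fun i j => by dsimp only; rw [abs_sub_comm (g i), add_comm (g i)],
    sum_product]
  push_cast
  rw [sum_congr rfl fun i hi => sum_window_card_multiplesBetween hg.injective hper hneg hi,
    sum_add_distrib, sum_add_distrib]
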